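/- Let d ∈ {2,3} and k ≥ 2. The linear map ℒ : [𝒫^k(ℝ^d)]^d × 𝒫^{k-1}(ℝ^d) → [𝒫^{k-2}(ℝ^d)]^d × 𝒫^{k-1}(ℝ^d) defined by ℒ(v,q) = (−Δv + ∇q, −div v) is surjective; that is, for every vector polynomial f with components in 𝒫^{k-2}(ℝ^d) and every g ∈ 𝒫^{k-1}(ℝ^d) there exist v with components in 𝒫^k(ℝ^d) and q ∈ 𝒫^{k-1}(ℝ^d) such that −Δv + ∇q = f and −div v = g. -/

import Mathlib

open MvPolynomial

/-- The formal Laplacian `Δp = ∑ⱼ ∂ⱼ∂ⱼp` of a polynomial in `d` variables. -/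
noncomputable def lap {d : ℕ} (p : MvPolynomial (Fin d) ℝ) : MvPolynomial (Fin d) ℝ :=
  ∑ j, pderiv j (pderiv j p)

/-- The formal divergence `div v = ∑ᵢ ∂ᵢvᵢ` of a polynomial vector field. -/
noncomputable def pdiv {d : ℕ} (v : Fin d → MvPolynomial (Fin d) ℝ) : MvPolynomial (Fin d) ℝ :=
  ∑ i, pderiv i (v i)

/-!
Put `v = ∇ψ - w` with `Δwᵢ = fᵢ`. Then `-Δv + ∇q = f` holds for `q = Δψ`, and `-div v = g` asks
for `Δψ = div w - g`. Everything thus reduces to the surjectivity of `Δ : 𝒫^{m+2} → 𝒫^m`, which is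
checked on monomials: `∂ᵢ²` maps `x^(α + 2eᵢ) / ((αᵢ + 1)(αᵢ + 2))` to `x^α`, and the remaining
terms `∂ⱼ²` of its Laplacian are monomials of the same degree with a larger exponent of `xᵢ`, so
they are covered by downward induction on `αᵢ`.
-/

namespace MvPolynomial

variable {σ R : Type*}

section CommSemiring

variable [CommSemiring R]

theorem pderiv_pderiv_comm (i j : σ) (p : MvPolynomial σ R) :
    pderiv i (pderiv j p) = pderiv j (pderiv i p) := by
  classical
  induction p using MvPolynomial.induction_on with
  | C a => simp
  | add p q hp hq => simp [hp, hq]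
  | mul_X p k hp =>
    simp only [pderiv_mul, pderiv_X, map_add, hp, Pi.single_apply]
    split_ifs <;> simp [add_right_comm]

theorem totalDegree_pderiv_le (i : σ) (p : MvPolynomial σ R) :
    (pderiv i p).totalDegree ≤ p.totalDegree - 1 := by
  refine Finset.sup_le fun m hm => ?_
  have hmem : m + Finsupp.single i 1 ∈ p.support := by
    rw [mem_support_iff, coeff_pderiv] at hm
    exact mem_support_iff.2 (left_ne_zero_of_mul hm)
  have := le_totalDegree hmem
  change (m + Finsupp.single i 1).degree ≤ _ at this
  change m.degree ≤ _
  rw [map_add, Finsupp.degree_single] at this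
  omega

theorem pderiv_pderiv_monomial_self (i : σ) (s : σ →₀ ℕ) (a : R) :
    pderiv i (pderiv i (monomial s a)) =
      monomial (s - Finsupp.single i 2) (a * s i * (s i - 1 : ℕ)) := by
  classical
  rw [pderiv_monomial, pderiv_monomial, tsub_tsub, ← Finsupp.single_add, Finsupp.tsub_apply,
    Finsupp.single_eq_same]

variable [Fintype σ]

noncomputable def laplacian : MvPolynomial σ R →ₗ[R] MvPolynomial σ R :=
  ∑ i, (pderiv i).toLinearMap ∘ₗ (pderiv i).toLinearMap

theorem laplacian_apply (p : MvPolynomial σ R) : laplacian p = ∑ i, pderiv i (pderiv i p) := by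
  simp [laplacian]

theorem pderiv_laplacian (i : σ) (p : MvPolynomial σ R) :
    pderiv i (laplacian p) = laplacian (pderiv i p) := by
  simp only [laplacian_apply, map_sum, pderiv_pderiv_comm i]

end CommSemiring

section Field

variable [Field R] [CharZero R] [Fintype σ]

theorem monomial_one_mem_map_laplacian (i : σ) {m : ℕ} {α : σ →₀ ℕ} (hα : α.degree ≤ m) :
    monomial α (1 : R) ∈ (restrictTotalDegree σ R (m + 2)).map laplacian := by
  classical
  induction hn : m - α i using Nat.strong_induction_on generalizing α with
  | _ n ih =>
  set M := (restrictTotalDegree σ R (m + 2)).map (laplacian (σ := σ) (R := R))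
  set s := α + Finsupp.single i 2 with hs
  set c : R := ((α i + 1) * (α i + 2) : R)⁻¹
  have hs_deg : s.degree = α.degree + 2 := by rw [map_add, Finsupp.degree_single]
  have hs_mem : monomial s c ∈ restrictTotalDegree σ R (m + 2) := by
    rw [restrictTotalDegree, monomial_mem_restrictSupport]
    left
    change s.degree ≤ m + 2
    omega
  have h_self : pderiv i (pderiv i (monomial s c)) = monomial α 1 := by
    rw [pderiv_pderiv_monomial_self, hs, add_tsub_cancel_right]
    congr 1
    simp only [Finsupp.add_apply, Finsupp.single_eq_same, c]
    have h1 : (α i + 1 : R) ≠ 0 := by exact_mod_cast (α i).succ_ne_zero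
    have h2 : (α i + 2 : R) ≠ 0 := by exact_mod_cast (α i + 1).succ_ne_zero
    push_cast [Nat.add_sub_cancel]
    field_simp
  have h_other : ∀ j ∈ Finset.univ.erase i, pderiv j (pderiv j (monomial s c)) ∈ M := by
    intro j hj
    have hji : j ≠ i := Finset.ne_of_mem_erase hj
    have hsj : s j = α j := by simp [hs, Finsupp.single_eq_of_ne hji]
    rw [pderiv_pderiv_monomial_self, hsj]
    rcases lt_or_ge (α j) 2 with hα_lt | hge
    · obtain h0 | h1 : α j = 0 ∨ α j = 1 := by omega
      · simp [h0]
      · simp [h1]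
    set β := s - Finsupp.single j 2
    have hβ_add : β + Finsupp.single j 2 = s :=
      tsub_add_cancel_of_le (Finsupp.single_le_iff.2 (hsj ▸ hge))
    have hβ_deg : β.degree ≤ m := by
      have := congrArg Finsupp.degree hβ_add
      rw [map_add, Finsupp.degree_single, hs_deg] at this
      omega
    have hβ_i : β i = α i + 2 := by
      simp [β, hs, Finsupp.single_eq_of_ne hji.symm]
    have hlt : m - β i < n := by
      have := Finsupp.le_degree i β
      omega
    rw [← mul_one (_ * _ * _), ← smul_eq_mul, ← smul_monomial]
    exact M.smul_mem _ (ih _ hlt hβ_deg rfl)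
  have h_lap : laplacian (monomial s c) =
      monomial α 1 + ∑ j ∈ Finset.univ.erase i, pderiv j (pderiv j (monomial s c)) := by
    rw [laplacian_apply, ← Finset.add_sum_erase _ _ (Finset.mem_univ i), h_self]
  rw [eq_sub_of_add_eq h_lap.symm]
  exact M.sub_mem (Submodule.mem_map_of_mem hs_mem) (M.sum_mem h_other)

theorem restrictTotalDegree_le_map_laplacian [Nonempty σ] (m : ℕ) :
    restrictTotalDegree σ R m ≤ (restrictTotalDegree σ R (m + 2)).map laplacian := by
  rw [restrictTotalDegree, restrictSupport_eq_span, Submodule.span_le]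
  rintro _ ⟨α, hα, rfl⟩
  exact monomial_one_mem_map_laplacian (Classical.arbitrary σ) hα

end Field

end MvPolynomial

theorem lap_eq_laplacian {d : ℕ} (p : MvPolynomial (Fin d) ℝ) : lap p = laplacian p :=
  (laplacian_apply p).symm

theorem totalDegree_pdiv_le {d n : ℕ} (v : Fin d → MvPolynomial (Fin d) ℝ)
    (hv : ∀ i, (v i).totalDegree ≤ n) : (pdiv v).totalDegree ≤ n - 1 :=
  totalDegree_finsetSum_le fun i _ =>
    (totalDegree_pderiv_le i (v i)).trans (Nat.sub_le_sub_right (hv i) 1)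

theorem exists_totalDegree_le_lap_eq {d m : ℕ} (hd : 0 < d) {g : MvPolynomial (Fin d) ℝ}
    (hg : g.totalDegree ≤ m) : ∃ φ, φ.totalDegree ≤ m + 2 ∧ lap φ = g := by
  have : Nonempty (Fin d) := ⟨⟨0, hd⟩⟩
  obtain ⟨φ, hφ, hlap⟩ :=
    restrictTotalDegree_le_map_laplacian m ((mem_restrictTotalDegree _ _ _).2 hg)
  exact ⟨φ, (mem_restrictTotalDegree _ _ _).1 hφ, by rw [lap_eq_laplacian, hlap]⟩

/-- The pointwise Stokes operator `ℒ(v, q) = (−Δv + ∇q, −div v)` maps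
`[𝒫ᵏ(ℝᵈ)]ᵈ × 𝒫^{k-1}(ℝᵈ)` onto `[𝒫^{k-2}(ℝᵈ)]ᵈ × 𝒫^{k-1}(ℝᵈ)` for `d ∈ {2, 3}` and `k ≥ 2`. -/
theorem stokes_operator_surjective (d k : ℕ) (hd : d = 2 ∨ d = 3) (hk : 2 ≤ k)
    (f : Fin d → MvPolynomial (Fin d) ℝ) (hf : ∀ i, (f i).totalDegree ≤ k - 2)
    (g : MvPolynomial (Fin d) ℝ) (hg : g.totalDegree ≤ k - 1) :
    ∃ (v : Fin d → MvPolynomial (Fin d) ℝ) (q : MvPolynomial (Fin d) ℝ),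
      (∀ i, (v i).totalDegree ≤ k) ∧ q.totalDegree ≤ k - 1 ∧
      (∀ i, -lap (v i) + pderiv i q = f i) ∧ -pdiv v = g := by
  have hd0 : 0 < d := by omega
  choose w hw_deg hw using fun i => exists_totalDegree_le_lap_eq hd0 (hf i)
  replace hw_deg : ∀ i, (w i).totalDegree ≤ k := fun i => (hw_deg i).trans (by omega)
  have hq_deg : (pdiv w - g).totalDegree ≤ k - 1 :=
    (totalDegree_sub _ _).trans (max_le (totalDegree_pdiv_le w hw_deg) hg)
  obtain ⟨ψ, hψ_deg, hψ⟩ := exists_totalDegree_le_lap_eq hd0 hq_deg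
  refine ⟨fun i => pderiv i ψ - w i, pdiv w - g, fun i => ?_, hq_deg, fun i => ?_, ?_⟩
  · exact (totalDegree_sub _ _).trans
      (max_le ((totalDegree_pderiv_le i ψ).trans (by omega)) (hw_deg i))
  · simp only [lap_eq_laplacian] at hψ hw ⊢
    rw [map_sub, ← pderiv_laplacian, hψ, hw]
    ring
  · simp only [pdiv, map_sub, Finset.sum_sub_distrib]
    rw [← lap, hψ, pdiv]
    ring
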